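/- arXiv:1807.01406 — 2 statements merged into one kernel-verified Lean document; each statement's English description precedes it below -/
import Mathlib

section
/- Let f be computed by a linear 2-RNN (h₀, 𝒜, Ω) with n hidden units, and let H^{(l)} ∈ ℝ^{d×⋯×d×p} be its order-(l+1) Hankel tensor defined by H^{(l)}_{i₁,…,i_l,:} = f(e_{i₁},…,e_{i_l}). Then H^{(l)} admits a tensor train decomposition of rank n: H^{(l)} = ⟪𝒜 ×₁ h₀, 𝒜, …, 𝒜, Ωᵀ⟫ with l−1 middle cores equal to 𝒜, i.e., H^{(l)}_{i₁,…,i_l,m} = (𝒜 ×₁ h₀)_{i₁,:} · 𝒜_{:,i₂,:} ⋯ 𝒜_{:,i_l,:} · (Ωᵀ)_{:,m} for all indices. -/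
open Matrix BigOperators

noncomputable section

def rnnStep {n d : ℕ} (A : Fin n → Fin d → Fin n → ℝ) (h : Fin n → ℝ) (x : Fin d → ℝ) :
    Fin n → ℝ := fun j => ∑ i, ∑ σ, A i σ j * h i * x σ

def hState {n d : ℕ} (A : Fin n → Fin d → Fin n → ℝ) (h₀ : Fin n → ℝ)
    (xs : List (Fin d → ℝ)) : Fin n → ℝ := xs.foldl (rnnStep A) h₀

def rnnOut {n d p : ℕ} (h₀ : Fin n → ℝ) (A : Fin n → Fin d → Fin n → ℝ)
    (Ω : Fin p → Fin n → ℝ) (xs : List (Fin d → ℝ)) : Fin p → ℝ :=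
  fun m => ∑ j, Ω m j * hState A h₀ xs j
def oneHot {d : ℕ} (σ : Fin d) : Fin d → ℝ := Pi.single σ 1

def hankel {d p : ℕ} (f : List (Fin d → ℝ) → Fin p → ℝ) (l : ℕ) :
    (Fin l → Fin d) → Fin p → ℝ :=
  fun i m => f (List.ofFn fun t => oneHot (i t)) m

/-- The `σ`-th middle tslice `𝒜_{:,σ,:}` of the transition tensor. -/
def tslice {n d : ℕ} (A : Fin n → Fin d → Fin n → ℝ) (σ : Fin d) :
    Matrix (Fin n) (Fin n) ℝ := fun i j => A i σ j

/-!
On a one-hot input `e_σ` the bilinear update `h ↦ 𝒜 ×₁ e_σ ×₂ h` is right multiplication by the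
slice `𝒜_{:,σ,:}`, so after reading `e_{i₀}, …, e_{i_l}` the hidden state is
`h₀ᵀ 𝒜_{:,i₀,:} ⋯ 𝒜_{:,i_l,:}`. Grouping `h₀ᵀ 𝒜_{:,i₀,:}` as the first core `𝒜 ×₁ h₀` and
pairing with the rows of `Ω` gives the tensor train.
-/

lemma vecMul_tslice {n d : ℕ} (A : Fin n → Fin d → Fin n → ℝ) (h : Fin n → ℝ) (σ : Fin d) :
    h ᵥ* tslice A σ = fun j => ∑ a, A a σ j * h a := by
  funext j
  simp only [vecMul, dotProduct, tslice, mul_comm]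

lemma rnnStep_oneHot {n d : ℕ} (A : Fin n → Fin d → Fin n → ℝ) (h : Fin n → ℝ) (σ : Fin d) :
    rnnStep A h (oneHot σ) = h ᵥ* tslice A σ := by
  rw [vecMul_tslice]
  funext j
  refine Finset.sum_congr rfl fun a _ => ?_
  simp [oneHot, Pi.single_apply]

lemma hState_map_oneHot {n d : ℕ} (A : Fin n → Fin d → Fin n → ℝ) (h : Fin n → ℝ)
    (L : List (Fin d)) :
    hState A h (L.map oneHot) = h ᵥ* (L.map (tslice A)).prod := by
  induction L generalizing h with
  | nil => simp [hState]
  | cons σ L ih =>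
    change hState A (rnnStep A h (oneHot σ)) (L.map oneHot) = _
    rw [ih, rnnStep_oneHot, List.map_cons, List.prod_cons, vecMul_vecMul]

/-- The Hankel tensor of a function computed by a linear 2-RNN `(h₀, 𝒜, Ω)` with `n`
hidden units admits the rank-`n` tensor train decomposition
`H^{(l)} = ⟪𝒜 ×₁ h₀, 𝒜, …, 𝒜, Ωᵀ⟫` (here sequences of length `l+1`, with `l` middle
cores `𝒜`). -/
theorem hankel_tensor_train {n d p l : ℕ}
    (h₀ : Fin n → ℝ) (A : Fin n → Fin d → Fin n → ℝ) (Ω : Fin p → Fin n → ℝ)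
    (f : List (Fin d → ℝ) → Fin p → ℝ) (hf : ∀ xs, f xs = rnnOut h₀ A Ω xs) :
    ∀ (i : Fin (l + 1) → Fin d) (m : Fin p),
      hankel f (l + 1) i m
        = dotProduct
            (Matrix.vecMul (fun j => ∑ a, A a (i 0) j * h₀ a)
              ((List.ofFn fun t : Fin l => tslice A (i t.succ)).prod))
            (fun j => Ω m j) := by
  intro i m
  have hinputs : (List.ofFn fun t => oneHot (i t)) = (List.ofFn i).map oneHot := by
    rw [List.map_ofFn]
    rfl
  have hcores : (List.ofFn i).map (tslice A)
      = tslice A (i 0) :: List.ofFn fun t : Fin l => tslice A (i t.succ) := by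
    rw [List.map_ofFn, List.ofFn_succ]
    rfl
  rw [hankel, hf, hinputs, rnnOut, hState_map_oneHot, hcores, List.prod_cons,
    ← vecMul_vecMul, vecMul_tslice, dotProduct_comm]
  rfl

end
end

section
/- (Recovery theorem.) Let f : (ℝᵈ)* → ℝᵖ be computed by a minimal linear 2-RNN with n hidden units, and let L be such that the d^L × d^L p matricization of the Hankel tensor H^{(2L)}_f has rank n. Then for any rank factorization ⟨⟨H^{(2L)}_f⟩⟩_{L,L+1} = P S with P ∈ ℝ^{d^L×n} and S ∈ ℝ^{n×d^L p}, the linear 2-RNN M = (α, 𝒜, Ω) defined by α = (S†)ᵀ ⟨⟨H^{(L)}_f⟩⟩_{L+1}, Ωᵀ = P† ⟨⟨H^{(L)}_f⟩⟩_{L,1}, and 𝒜 = ⟨⟨H^{(2L+1)}_f⟩⟩_{L,1,L+1} ×₁ P† ×₃ (S†)ᵀ, is a minimal linear 2-RNN computing f. -/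
open Matrix BigOperators

noncomputable section

def IsMinimal {d p : ℕ} (n : ℕ) (f : List (Fin d → ℝ) → Fin p → ℝ) : Prop :=
  ∀ (n' : ℕ) (h₀' : Fin n' → ℝ) (A' : Fin n' → Fin d → Fin n' → ℝ) (Ω' : Fin p → Fin n' → ℝ),
    (∀ xs, rnnOut h₀' A' Ω' xs = f xs) → n ≤ n'

/-- `Md` is the Moore–Penrose pseudo-inverse of `M`. -/
def IsMoorePenrose {a b : Type*} [Fintype a] [Fintype b] [DecidableEq a] [DecidableEq b]
    (M : Matrix a b ℝ) (Md : Matrix b a ℝ) : Prop :=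
  M * Md * M = M ∧ Md * M * Md = Md ∧ (M * Md)ᵀ = M * Md ∧ (Md * M)ᵀ = Md * M


/-!
Write `W(w)` for the product of the transition matrices `Σ_σ x_σ 𝒜_{:,σ,:}` along a word `w`,
so that `f(w)ᵀ = h₀ᵀ W(w) Ωᵀ`. Every Hankel block then factors through the hidden states: with
`F` the states reached after the length-`L` prefixes and `B` the outputs read off after the
length-`L` suffixes, `⟨⟨H^{(2L)}⟩⟩ = F B` and the `σ`-slice of `⟨⟨H^{(2L+1)}⟩⟩` is `F 𝒜_σ B`.
As this matrix has rank `n`, both `P S` and `F B` are rank factorizations through `ℝⁿ`, so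
`P†P = 1 = SS†` and `R = P†F`, `Q = BS†` are inverse to each other. The recovered parameters
are then `h₀ᵀQ`, `R 𝒜_σ Q` and `RΩᵀ`: the original RNN after the change of basis `Q`.
-/

namespace Matrix

variable {K m n k : Type*} [Field K] [Fintype m] [Fintype n] [Fintype k] [DecidableEq n]

theorem isUnit_of_rank_eq_card {M : Matrix n n K} (h : M.rank = Fintype.card n) : IsUnit M := by
  rw [← mulVec_surjective_iff_isUnit, ← coe_mulVecLin, ← LinearMap.range_eq_top]
  exact Submodule.eq_top_of_finrank_eq (by rw [Module.finrank_fintype_fun_eq_card]; exact h)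

theorem mul_eq_one_of_mul_mul_eq_self_of_rank_eq_card_width {P : Matrix m n K} {Pd : Matrix n m K}
    (hr : P.rank = Fintype.card n) (h : P * Pd * P = P) : Pd * P = 1 := by
  have hunit : IsUnit (Pd * P) := by
    refine isUnit_of_rank_eq_card (le_antisymm (rank_le_card_width _) ?_)
    calc Fintype.card n = (P * (Pd * P)).rank := by rw [← Matrix.mul_assoc, h, hr]
      _ ≤ (Pd * P).rank := rank_mul_le_right _ _
  refine (IsIdempotentElem.iff_eq_one_of_isUnit hunit).mp ?_
  rw [IsIdempotentElem, Matrix.mul_assoc, ← Matrix.mul_assoc P, h]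

theorem mul_eq_one_of_mul_mul_eq_self_of_rank_eq_card_height {S : Matrix n m K}
    {Sd : Matrix m n K} (hr : S.rank = Fintype.card n) (h : S * Sd * S = S) : S * Sd = 1 := by
  have hunit : IsUnit (S * Sd) := by
    refine isUnit_of_rank_eq_card (le_antisymm (rank_le_card_width _) ?_)
    calc Fintype.card n = (S * Sd * S).rank := by rw [h, hr]
      _ ≤ (S * Sd).rank := rank_mul_le_left _ _
  refine (IsIdempotentElem.iff_eq_one_of_isUnit hunit).mp ?_
  rw [IsIdempotentElem, ← Matrix.mul_assoc, h]

theorem mul_mul_eq_one_of_rank_factorizations {P F : Matrix m n K} {S B : Matrix n k K}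
    {Pd : Matrix n m K} {Sd : Matrix k n K} (hPS : P * S = F * B)
    (hr : (P * S).rank = Fintype.card n) (hPd : P * Pd * P = P) (hSd : S * Sd * S = S) :
    Pd * F * (B * Sd) = 1 := by
  have hP : Pd * P = 1 := mul_eq_one_of_mul_mul_eq_self_of_rank_eq_card_width
    (le_antisymm (rank_le_card_width P) (hr ▸ rank_mul_le_left P S)) hPd
  have hS : S * Sd = 1 := mul_eq_one_of_mul_mul_eq_self_of_rank_eq_card_height
    (le_antisymm (rank_le_card_height S) (hr ▸ rank_mul_le_right P S)) hSd
  calc Pd * F * (B * Sd) = Pd * P * (S * Sd) := by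
        rw [Matrix.mul_assoc, ← Matrix.mul_assoc F, ← hPS, Matrix.mul_assoc P,
          ← Matrix.mul_assoc Pd]
    _ = 1 := by rw [hP, hS, Matrix.one_mul]

end Matrix

section LinearRNN

variable {n d p : ℕ}

def inputSlice (A : Fin n → Fin d → Fin n → ℝ) (σ : Fin d) : Matrix (Fin n) (Fin n) ℝ :=
  of fun i j => A i σ j

def transitionMatrix (A : Fin n → Fin d → Fin n → ℝ) (x : Fin d → ℝ) :
    Matrix (Fin n) (Fin n) ℝ :=
  ∑ σ, x σ • inputSlice A σ

def wordMatrix (A : Fin n → Fin d → Fin n → ℝ) (xs : List (Fin d → ℝ)) :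
    Matrix (Fin n) (Fin n) ℝ :=
  (xs.map (transitionMatrix A)).prod

variable (A : Fin n → Fin d → Fin n → ℝ)

@[simp]
theorem wordMatrix_nil : wordMatrix A [] = 1 := rfl

@[simp]
theorem wordMatrix_cons (x : Fin d → ℝ) (xs : List (Fin d → ℝ)) :
    wordMatrix A (x :: xs) = transitionMatrix A x * wordMatrix A xs :=
  List.prod_cons

theorem wordMatrix_append (xs ys : List (Fin d → ℝ)) :
    wordMatrix A (xs ++ ys) = wordMatrix A xs * wordMatrix A ys := by
  simp [wordMatrix]

theorem transitionMatrix_oneHot (σ : Fin d) : transitionMatrix A (oneHot σ) = inputSlice A σ := by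
  simp [transitionMatrix, oneHot, Pi.single_apply]

theorem rnnStep_eq_vecMul (h : Fin n → ℝ) (x : Fin d → ℝ) :
    rnnStep A h x = h ᵥ* transitionMatrix A x := by
  funext j
  simp only [rnnStep, transitionMatrix, inputSlice, vecMul, dotProduct, Matrix.sum_apply,
    Matrix.smul_apply, of_apply, smul_eq_mul, Finset.mul_sum]
  exact Finset.sum_congr rfl fun i _ => Finset.sum_congr rfl fun σ _ => by ring

theorem hState_eq_vecMul (h : Fin n → ℝ) (xs : List (Fin d → ℝ)) :
    hState A h xs = h ᵥ* wordMatrix A xs := by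
  induction xs generalizing h with
  | nil => simp [hState]
  | cons x xs ih =>
    rw [hState, List.foldl_cons, ← hState, ih, rnnStep_eq_vecMul, vecMul_vecMul, wordMatrix_cons]

variable (h₀ : Fin n → ℝ) (Ω : Fin p → Fin n → ℝ)

theorem rnnOut_apply_eq_dotProduct (xs : List (Fin d → ℝ)) (m : Fin p) :
    rnnOut h₀ A Ω xs m = (h₀ ᵥ* wordMatrix A xs) ⬝ᵥ Ω m := by
  rw [rnnOut, ← hState_eq_vecMul, dotProduct_comm]
  rfl

theorem rnnOut_append (xs ys : List (Fin d → ℝ)) (m : Fin p) :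
    rnnOut h₀ A Ω (xs ++ ys) m = (h₀ ᵥ* wordMatrix A xs) ⬝ᵥ (wordMatrix A ys *ᵥ Ω m) := by
  rw [rnnOut_apply_eq_dotProduct, wordMatrix_append, ← vecMul_vecMul, dotProduct_mulVec]

variable {A}

theorem mul_wordMatrix_of_mul_inputSlice {A' : Fin n → Fin d → Fin n → ℝ}
    {Q : Matrix (Fin n) (Fin n) ℝ} (hA : ∀ σ, Q * inputSlice A' σ = inputSlice A σ * Q)
    (xs : List (Fin d → ℝ)) : Q * wordMatrix A' xs = wordMatrix A xs * Q := by
  have hT (x : Fin d → ℝ) : Q * transitionMatrix A' x = transitionMatrix A x * Q := by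
    simp only [transitionMatrix, Matrix.mul_sum, Matrix.sum_mul, Matrix.mul_smul,
      Matrix.smul_mul, hA]
  induction xs with
  | nil => simp
  | cons x xs ih =>
    rw [wordMatrix_cons, wordMatrix_cons, ← Matrix.mul_assoc, hT, Matrix.mul_assoc, ih,
      Matrix.mul_assoc]

theorem rnnOut_changeOfBasis {A' : Fin n → Fin d → Fin n → ℝ} {Q R : Matrix (Fin n) (Fin n) ℝ}
    (hQR : Q * R = 1) (hA : ∀ σ, inputSlice A' σ = R * inputSlice A σ * Q) :
    rnnOut (h₀ ᵥ* Q) A' (fun m => R *ᵥ Ω m) = rnnOut h₀ A Ω := by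
  have hW := mul_wordMatrix_of_mul_inputSlice (A := A) (A' := A') (Q := Q) fun σ => by
    rw [hA, ← Matrix.mul_assoc, ← Matrix.mul_assoc, hQR, Matrix.one_mul]
  funext xs m
  rw [rnnOut_apply_eq_dotProduct, rnnOut_apply_eq_dotProduct, vecMul_vecMul, hW,
    ← vecMul_vecMul, ← dotProduct_mulVec, mulVec_mulVec, hQR, one_mulVec]

end LinearRNN

section Hankel

variable {n d p L : ℕ}

abbrev oneHotWord (u : Fin L → Fin d) : List (Fin d → ℝ) := List.ofFn fun t => oneHot (u t)

def forwardMatrix (h₀ : Fin n → ℝ) (A : Fin n → Fin d → Fin n → ℝ) (L : ℕ) :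
    Matrix (Fin L → Fin d) (Fin n) ℝ :=
  of fun u => h₀ ᵥ* wordMatrix A (oneHotWord u)

def backwardMatrix (A : Fin n → Fin d → Fin n → ℝ) (Ω : Fin p → Fin n → ℝ) (L : ℕ) :
    Matrix (Fin n) ((Fin L → Fin d) × Fin p) ℝ :=
  of fun a c => (wordMatrix A (oneHotWord c.1) *ᵥ Ω c.2) a

/-- With `mid = []` this is `⟨⟨H^{(2L)}_f⟩⟩_{L,L+1}`, with `mid = [oneHot σ]` the `σ`-slice of
`⟨⟨H^{(2L+1)}_f⟩⟩_{L,1,L+1}`. -/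
def hankelMatrix (f : List (Fin d → ℝ) → Fin p → ℝ) (L : ℕ) (mid : List (Fin d → ℝ)) :
    Matrix (Fin L → Fin d) ((Fin L → Fin d) × Fin p) ℝ :=
  of fun u c => f (oneHotWord u ++ mid ++ oneHotWord c.1) c.2

variable (h₀ : Fin n → ℝ) (A : Fin n → Fin d → Fin n → ℝ) (Ω : Fin p → Fin n → ℝ)

theorem rnnOut_oneHotWord_eq_mulVec (u : Fin L → Fin d) (m : Fin p) :
    rnnOut h₀ A Ω (oneHotWord u) m = (forwardMatrix h₀ A L *ᵥ Ω m) u := by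
  rw [rnnOut_apply_eq_dotProduct]
  rfl

theorem rnnOut_oneHotWord_eq_vecMul (c : (Fin L → Fin d) × Fin p) :
    rnnOut h₀ A Ω (oneHotWord c.1) c.2 = (h₀ ᵥ* backwardMatrix A Ω L) c := by
  rw [rnnOut_apply_eq_dotProduct, ← dotProduct_mulVec]
  rfl

theorem hankelMatrix_rnnOut (mid : List (Fin d → ℝ)) :
    hankelMatrix (rnnOut h₀ A Ω) L mid
      = forwardMatrix h₀ A L * wordMatrix A mid * backwardMatrix A Ω L := by
  ext u c
  rw [hankelMatrix, of_apply, rnnOut_append, wordMatrix_append, ← vecMul_vecMul]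
  rfl

end Hankel

/-- Recovery theorem: a minimal linear 2-RNN computing `f` can be recovered from any rank
factorization `⟨⟨H^{(2L)}⟩⟩_{L,L+1} = P S` of the Hankel tensor via
`α = (S†)ᵀ vec(H^{(L)})`, `Ωᵀ = P† ⟨⟨H^{(L)}⟩⟩_{L,1}`,
`𝒜 = ⟨⟨H^{(2L+1)}⟩⟩_{L,1,L+1} ×₁ P† ×₃ (S†)ᵀ`. -/
theorem linear2RNN_recovery {n d p L : ℕ}
    (h₀ : Fin n → ℝ) (A : Fin n → Fin d → Fin n → ℝ) (Ω : Fin p → Fin n → ℝ)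
    (f : List (Fin d → ℝ) → Fin p → ℝ) (hf : ∀ xs, f xs = rnnOut h₀ A Ω xs)
    (hmin : IsMinimal n f)
    (H2L : Matrix (Fin L → Fin d) ((Fin L → Fin d) × Fin p) ℝ)
    (hH2L : ∀ u v m, H2L u (v, m)
      = f ((List.ofFn fun t => oneHot (u t)) ++ (List.ofFn fun t => oneHot (v t))) m)
    (hrank : H2L.rank = n)
    (P : Matrix (Fin L → Fin d) (Fin n) ℝ) (S : Matrix (Fin n) ((Fin L → Fin d) × Fin p) ℝ)
    (hPS : H2L = P * S)
    (Pd : Matrix (Fin n) (Fin L → Fin d) ℝ) (hPd : IsMoorePenrose P Pd)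
    (Sd : Matrix ((Fin L → Fin d) × Fin p) (Fin n) ℝ) (hSd : IsMoorePenrose S Sd)
    -- the recovered parameters
    (α : Fin n → ℝ)
    (hα : ∀ j, α j = ∑ c : (Fin L → Fin d) × Fin p,
      Sd c j * f (List.ofFn fun t => oneHot (c.1 t)) c.2)
    (Ωnew : Fin p → Fin n → ℝ)
    (hΩ : ∀ m a, Ωnew m a = ∑ u, Pd a u * f (List.ofFn fun t => oneHot (u t)) m)
    (Anew : Fin n → Fin d → Fin n → ℝ)
    (hA : ∀ a σ b, Anew a σ b = ∑ u, ∑ c : (Fin L → Fin d) × Fin p,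
      Pd a u * Sd c b *
        f ((List.ofFn fun t => oneHot (u t)) ++ [oneHot σ]
            ++ (List.ofFn fun t => oneHot (c.1 t))) c.2) :
    (∀ xs, rnnOut α Anew Ωnew xs = f xs) ∧ IsMinimal n f := by
  refine ⟨fun xs => ?_, hmin⟩
  obtain rfl : f = rnnOut h₀ A Ω := funext hf
  have hH : H2L = hankelMatrix (rnnOut h₀ A Ω) L [] := by
    ext u ⟨v, m⟩
    simp [hH2L, hankelMatrix]
  have hRQ : Pd * forwardMatrix h₀ A L * (backwardMatrix A Ω L * Sd) = 1 := by
    refine Matrix.mul_mul_eq_one_of_rank_factorizations ?_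
      (by rw [← hPS, hrank, Fintype.card_fin]) hPd.1 hSd.1
    rw [← hPS, hH, hankelMatrix_rnnOut, wordMatrix_nil, Matrix.mul_one]
  have hα' : α = h₀ ᵥ* (backwardMatrix A Ω L * Sd) := by
    funext j
    rw [hα j, ← vecMul_vecMul]
    simp only [rnnOut_oneHotWord_eq_vecMul]
    exact Finset.sum_congr rfl fun c _ => mul_comm _ _
  have hΩ' : Ωnew = fun m => (Pd * forwardMatrix h₀ A L) *ᵥ Ω m := by
    funext m a
    rw [hΩ, ← mulVec_mulVec]
    simp only [rnnOut_oneHotWord_eq_mulVec]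
    rfl
  have hA' : ∀ σ, inputSlice Anew σ
      = Pd * forwardMatrix h₀ A L * inputSlice A σ * (backwardMatrix A Ω L * Sd) := by
    intro σ
    have hslice : inputSlice Anew σ = Pd * hankelMatrix (rnnOut h₀ A Ω) L [oneHot σ] * Sd := by
      ext a b
      simp only [inputSlice, hankelMatrix, hA, mul_apply, of_apply, Finset.sum_mul]
      rw [Finset.sum_comm]
      exact Finset.sum_congr rfl fun c _ => Finset.sum_congr rfl fun u _ => by ring
    rw [hslice, hankelMatrix_rnnOut, wordMatrix_cons, wordMatrix_nil, Matrix.mul_one,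
      transitionMatrix_oneHot]
    simp only [Matrix.mul_assoc]
  rw [hα', hΩ', rnnOut_changeOfBasis h₀ Ω (mul_eq_one_comm.mp hRQ) hA']
end
end
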